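/- Let I be an irreducible signature of Q_n, let X be a nonempty vertex of Q_n, and let x ∈ X. Then there exists an upright spanning tree T of Q_n with signature I such that ψ_T(X) = x. -/

import Mathlib

open SimpleGraph

/-- The `n`-cube: vertices are the subsets of `[n]` (modelled as `Finset (Fin n)`),
with an edge between `X` and `Y` iff their symmetric difference is a singleton. -/
def cube (n : ℕ) : SimpleGraph (Finset (Fin n)) where
  Adj X Y := (symmDiff X Y).card = 1
  symm := by
    constructor
    intro X Y h
    rwa [symmDiff_comm]
  loopless := by
    constructor
    intro X h
    simp [symmDiff_self, Finset.bot_eq_empty] at h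

/-- `T` is a spanning tree of `G` (both graphs on the same vertex set). -/
def IsSpanningTreeOf {V : Type*} (T G : SimpleGraph V) : Prop :=
  T ≤ G ∧ T.IsTree

/-- The edge `e` of the `n`-cube is in direction `i`. -/
def edgeInDir {n : ℕ} (i : Fin n) (e : Sym2 (Finset (Fin n))) : Prop :=
  ∃ X : Finset (Fin n), e = s(X, symmDiff X {i})

/-- The number of edges of `T` in direction `i`. -/
noncomputable def dirCount {n : ℕ} (T : SimpleGraph (Finset (Fin n))) (i : Fin n) : ℕ :=
  {e | e ∈ T.edgeSet ∧ edgeInDir i e}.ncard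

/-- `a` is the signature of the tree `T`. -/
def HasSig {n : ℕ} (T : SimpleGraph (Finset (Fin n))) (a : Fin n → ℕ) : Prop :=
  ∀ i, dirCount T i = a i

/-- `a` is a signature of `Q_n`, i.e. the signature of some spanning tree of the `n`-cube. -/
def IsSignature (n : ℕ) (a : Fin n → ℕ) : Prop :=
  ∃ T, IsSpanningTreeOf T (cube n) ∧ HasSig T a

/-- A section of the set of nonempty subsets of `[n]`. -/
def IsSection {n : ℕ} (ψ : Finset (Fin n) → Fin n) : Prop :=
  ∀ X : Finset (Fin n), X.Nonempty → ψ X ∈ X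

/-- The number of nonempty subsets on which the section `ψ` takes the value `i`. -/
noncomputable def secCount {n : ℕ} (ψ : Finset (Fin n) → Fin n) (i : Fin n) : ℕ :=
  {X : Finset (Fin n) | X.Nonempty ∧ ψ X = i}.ncard

/-- The tuple `a` reduces over `R` : `Σ_{i ∈ R} a i = 2^|R| - 1`. -/
def ReducesOver {n : ℕ} (a : Fin n → ℕ) (R : Finset (Fin n)) : Prop :=
  ∑ i ∈ R, a i = 2 ^ R.card - 1

/-- `a` is reducible: it reduces over some proper nonempty subset of `[n]`. -/
def IsReducibleSig {n : ℕ} (a : Fin n → ℕ) : Prop :=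
  ∃ R : Finset (Fin n), R.Nonempty ∧ R ≠ Finset.univ ∧ ReducesOver a R

/-- `a` is irreducible. -/
def IsIrreducibleSig {n : ℕ} (a : Fin n → ℕ) : Prop := ¬ IsReducibleSig a

/-- `T` is upright: every vertex `X` is at distance `|X|` in `T` from the root `∅`. -/
def IsUpright {n : ℕ} (T : SimpleGraph (Finset (Fin n))) : Prop :=
  ∀ X : Finset (Fin n), T.dist X ∅ = X.card

/-- `ψ` is the section associated to the upright tree `T`: for each nonempty `X`,
`ψ X ∈ X` and `X - {ψ X}` is the next vertex after `X` on the path in `T` from `X` to `∅`. -/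
def IsTreeSection {n : ℕ} (T : SimpleGraph (Finset (Fin n))) (ψ : Finset (Fin n) → Fin n) : Prop :=
  ∀ X : Finset (Fin n), X.Nonempty → ψ X ∈ X ∧ T.Adj X (X.erase (ψ X))

/-- The minimum of `Σ_{i ∈ K} a i` over the sets `K` of `k` directions. -/
noncomputable def minSum {n : ℕ} (a : Fin n → ℕ) (k : ℕ) : ℕ :=
  sInf {m : ℕ | ∃ K : Finset (Fin n), K.card = k ∧ ∑ i ∈ K, a i = m}

/-- The excess of `a` at `k`. -/
noncomputable def excess {n : ℕ} (a : Fin n → ℕ) (k : ℕ) : ℤ :=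
  (minSum a k : ℤ) - (2 ^ k - 1)

/-- The result of sliding the edge `e` in direction `i`. -/
def slideEdge {n : ℕ} (i : Fin n) (e : Sym2 (Finset (Fin n))) : Sym2 (Finset (Fin n)) :=
  Sym2.map (fun X => symmDiff X {i}) e

/-- The edge `e` of the spanning tree `T` of `Q_n` is `i`-slidable. -/
def Slidable (n : ℕ) (T : SimpleGraph (Finset (Fin n))) (i : Fin n)
    (e : Sym2 (Finset (Fin n))) : Prop :=
  e ∈ T.edgeSet ∧
    IsSpanningTreeOf (SimpleGraph.fromEdgeSet ((T.edgeSet \ {e}) ∪ {slideEdge i e})) (cube n)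

/-- The edge set `E` is (the edge set of) a spanning tree of the subgraph of the
`n`-cube induced on the vertex set `s`. -/
def IsSpanningTreeOn (n : ℕ) (s : Set (Finset (Fin n))) (E : Set (Sym2 (Finset (Fin n)))) : Prop :=
  E ⊆ (cube n).edgeSet ∧ (∀ e ∈ E, ∀ v ∈ e, v ∈ s) ∧
    ((SimpleGraph.fromEdgeSet E).induce s).IsTree

/-- The edges of `T` with both endpoints in `s`. -/
def edgesWithin {n : ℕ} (s : Set (Finset (Fin n))) (T : SimpleGraph (Finset (Fin n))) :
    Set (Sym2 (Finset (Fin n))) :=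
  {e | e ∈ T.edgeSet ∧ ∀ v ∈ e, v ∈ s}

/-- The edge `e` of the tree with edge set `E`, spanning the subgraph of the `n`-cube
induced on `s`, is `i`-slidable. -/
def SlidableOn (n : ℕ) (s : Set (Finset (Fin n))) (E : Set (Sym2 (Finset (Fin n))))
    (i : Fin n) (e : Sym2 (Finset (Fin n))) : Prop :=
  e ∈ E ∧ IsSpanningTreeOn n s ((E \ {e}) ∪ {slideEdge i e})

/-- The number of edges of `T` in direction `i` with both endpoints in `s`. -/
noncomputable def dirCountOn {n : ℕ} (s : Set (Finset (Fin n)))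
    (T : SimpleGraph (Finset (Fin n))) (i : Fin n) : ℕ :=
  {e | e ∈ T.edgeSet ∧ edgeInDir i e ∧ ∀ v ∈ e, v ∈ s}.ncard

/-- `T'` is a spanning tree of the `n`-cube obtained from the spanning tree `T` by a
single edge slide. -/
def SlideStep (n : ℕ) (T T' : SimpleGraph (Finset (Fin n))) : Prop :=
  IsSpanningTreeOf T (cube n) ∧ IsSpanningTreeOf T' (cube n) ∧
    ∃ (i : Fin n) (e : Sym2 (Finset (Fin n))), e ∈ T.edgeSet ∧
      T' = SimpleGraph.fromEdgeSet ((T.edgeSet \ {e}) ∪ {slideEdge i e})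

/-- The trees `T` and `T'` are related by a single edge slide. -/
def SlideAdj (n : ℕ) (T T' : SimpleGraph (Finset (Fin n))) : Prop :=
  T ≠ T' ∧ ∃ (i : Fin n) (e : Sym2 (Finset (Fin n))),
    (e ∈ T.edgeSet ∧ T' = SimpleGraph.fromEdgeSet ((T.edgeSet \ {e}) ∪ {slideEdge i e})) ∨
    (e ∈ T'.edgeSet ∧ T = SimpleGraph.fromEdgeSet ((T'.edgeSet \ {e}) ∪ {slideEdge i e}))

/-- The spanning trees of the `n`-cube. -/
def SpanningTrees (n : ℕ) := {T : SimpleGraph (Finset (Fin n)) // IsSpanningTreeOf T (cube n)}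

/-- The edge slide graph `E(n)` of the `n`-cube. -/
def eslide (n : ℕ) : SimpleGraph (SpanningTrees n) where
  Adj T T' := SlideAdj n T.1 T'.1
  symm := by
    constructor
    rintro T T' ⟨hne, i, e, h⟩
    exact ⟨hne.symm, i, e, h.symm⟩
  loopless := by
    constructor
    rintro T ⟨hne, -⟩
    exact hne rfl

/-- The projection `π_R(T)` of `T` to `Q_R`: a graph on the subsets of `R`, with `A`
adjacent to `B` iff some edge of `T` projects to `{A, B}`. -/
def projTree (n : ℕ) (R : Finset (Fin n)) (T : SimpleGraph (Finset (Fin n))) :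
    SimpleGraph ↥{W : Finset (Fin n) | W ⊆ R} where
  Adj A B := A.1 ≠ B.1 ∧ ∃ U V : Finset (Fin n), T.Adj U V ∧ U ∩ R = A.1 ∧ V ∩ R = B.1
  symm := by
    constructor
    rintro A B ⟨hne, U, V, hUV, hU, hV⟩
    exact ⟨hne.symm, V, U, hUV.symm, hV, hU⟩
  loopless := by
    constructor
    rintro A ⟨hne, -⟩
    exact hne rfl

/-- The projected edge set `π_R(T)`: images under `π_R` of the edges of `T` in
directions belonging to `R`. -/
def projEdges {n : ℕ} (R : Finset (Fin n)) (T : SimpleGraph (Finset (Fin n))) :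
    Set (Sym2 (Finset (Fin n))) :=
  {f | ∃ e ∈ T.edgeSet, (∃ i ∈ R, edgeInDir i e) ∧ f = Sym2.map (· ∩ R) e}

/-- The decomposition `T ↦ (F_T, (T(R,X))_{X ⊆ R})` of a tree reducing over `R`. -/
def decompose (n : ℕ) (R : Finset (Fin n)) (T : SimpleGraph (Finset (Fin n))) :
    Set (Sym2 (Finset (Fin n))) ×
      ((X : Finset (Fin n)) → X ⊆ R → SimpleGraph ↥{W : Finset (Fin n) | W ∩ R = X}) :=
  ⟨{e | e ∈ T.edgeSet ∧ ∃ i ∈ R, edgeInDir i e},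
   fun X _ => T.induce {W : Finset (Fin n) | W ∩ R = X}⟩

/-- `s` is the least index such that `ε_k(a) = 0` for all `s ≤ k ≤ n`; i.e. the
entries of (an ordered) `a` with index `≤ s` form the unsaturated part of `a`. -/
def UnsatIndex (n : ℕ) (a : Fin n → ℕ) (s : ℕ) : Prop :=
  (∀ k, s ≤ k → k ≤ n → excess a k = 0) ∧
    ∀ s' < s, ¬ (∀ k, s' ≤ k → k ≤ n → excess a k = 0)

/-- The restriction of `a` to its first `s` entries is reducible (as a tuple of length `s`). -/
def ReducibleBelow {n : ℕ} (a : Fin n → ℕ) (s : ℕ) : Prop :=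
  ∃ R : Finset (Fin n), R.Nonempty ∧ (∀ i ∈ R, (i : ℕ) < s) ∧ R.card < s ∧
    ∑ i ∈ R, a i = 2 ^ R.card - 1

/-- `a` is strictly reducible: it is reducible and its unsaturated part is reducible. -/
def StrictlyReducible (n : ℕ) (a : Fin n → ℕ) : Prop :=
  IsReducibleSig a ∧
    ∃ (σ : Equiv.Perm (Fin n)) (s : ℕ), Monotone (a ∘ σ) ∧
      UnsatIndex n (a ∘ σ) s ∧ ReducibleBelow (a ∘ σ) s

/-!
An upright spanning tree is the same thing as a section `ψ`: the tree joins each nonempty `Y`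
to `Y.erase (ψ Y)`, and its edges in direction `i` correspond to the `Y` with `ψ Y = i`. So we
need a section with `ψ X = x` taking each value `i` exactly `a i` times. This is a matching
problem with capacities: every nonempty `Y ≠ X` chooses an element of `Y`, `X` chooses `x`, and
`i` can be chosen `a i` times. Hall's condition comes from the inequalities
`∑_{i ∈ R} a i ≥ 2 ^ |R| - 1`, obtained by projecting a tree with signature `a` onto `Q_R`;
irreducibility makes them strict for proper nonempty `R`, which leaves exactly the room needed
for pinning `X` to `x`.
-/

section ParentGraph

variable {V : Type*}

def parentGraph (p : V → V) (r : V) : SimpleGraph V :=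
  SimpleGraph.fromRel fun v w => v ≠ r ∧ w = p v

variable {p : V → V} {r : V} {h : V → ℕ}

lemma parentGraph_adj_parent (hp : ∀ v, v ≠ r → h (p v) + 1 = h v) {v : V} (hv : v ≠ r) :
    (parentGraph p r).Adj v (p v) := by
  refine (SimpleGraph.fromRel_adj _ _ _).mpr ⟨fun hvp => ?_, Or.inl ⟨hv, rfl⟩⟩
  have := hp v hv
  rw [← hvp] at this
  omega

lemma height_eq_or_of_parentGraph_adj (hp : ∀ v, v ≠ r → h (p v) + 1 = h v) {v w : V}
    (hvw : (parentGraph p r).Adj v w) : h v = h w + 1 ∨ h w = h v + 1 := by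
  obtain ⟨-, ⟨hv, rfl⟩ | ⟨hw, rfl⟩⟩ := (SimpleGraph.fromRel_adj _ _ _).mp hvw
  · exact Or.inl (hp v hv).symm
  · exact Or.inr (hp w hw).symm

lemma le_height_add_length (hp : ∀ v, v ≠ r → h (p v) + 1 = h v) {v w : V}
    (q : (parentGraph p r).Walk v w) : h v ≤ h w + q.length := by
  induction q with
  | nil => simp
  | cons hadj _ ih =>
    have := height_eq_or_of_parentGraph_adj hp hadj
    rw [SimpleGraph.Walk.length_cons]
    omega

lemma exists_parentGraph_walk_root (hp : ∀ v, v ≠ r → h (p v) + 1 = h v) (hr : h r = 0)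
    (v : V) : ∃ q : (parentGraph p r).Walk v r, q.length = h v := by
  induction hv : h v using Nat.strong_induction_on generalizing v with
  | _ k ih =>
    by_cases hvr : v = r
    · subst hvr
      exact ⟨.nil, by rw [← hv, hr, SimpleGraph.Walk.length_nil]⟩
    · have hpv := hp v hvr
      obtain ⟨q, hq⟩ := ih (h (p v)) (by omega) (p v) rfl
      exact ⟨.cons (parentGraph_adj_parent hp hvr) q, by simp [hq]; omega⟩

lemma parentGraph_connected (hp : ∀ v, v ≠ r → h (p v) + 1 = h v) (hr : h r = 0) :
    (parentGraph p r).Connected := by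
  have : Nonempty V := ⟨r⟩
  have reach (v : V) : (parentGraph p r).Reachable v r :=
    ⟨(exists_parentGraph_walk_root hp hr v).choose⟩
  exact .mk fun v w => (reach v).trans (reach w).symm

lemma parentGraph_dist_root (hp : ∀ v, v ≠ r → h (p v) + 1 = h v) (hr : h r = 0) (v : V) :
    (parentGraph p r).dist v r = h v := by
  obtain ⟨q, hq⟩ := exists_parentGraph_walk_root hp hr v
  obtain ⟨q', hq'⟩ := (parentGraph_connected hp hr).exists_walk_length_eq_dist v r
  have := SimpleGraph.dist_le q
  have := le_height_add_length hp q'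
  omega

lemma edgeSet_parentGraph (hp : ∀ v, v ≠ r → h (p v) + 1 = h v) :
    (parentGraph p r).edgeSet = (fun v => s(v, p v)) '' {r}ᶜ := by
  ext e
  induction e using Sym2.ind with
  | _ v w =>
    simp only [SimpleGraph.mem_edgeSet, Set.mem_image, Set.mem_compl_singleton_iff]
    constructor
    · intro hvw
      obtain ⟨-, ⟨hv, rfl⟩ | ⟨hw, rfl⟩⟩ := (SimpleGraph.fromRel_adj _ _ _).mp hvw
      · exact ⟨v, hv, rfl⟩
      · exact ⟨w, hw, Sym2.eq_swap⟩
    · rintro ⟨u, hu, huvw⟩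
      rw [← SimpleGraph.mem_edgeSet, ← huvw, SimpleGraph.mem_edgeSet]
      exact parentGraph_adj_parent hp hu

lemma injOn_parentEdge (hp : ∀ v, v ≠ r → h (p v) + 1 = h v) :
    Set.InjOn (fun v => s(v, p v)) {r}ᶜ := by
  intro v hv w hw hvw
  rcases Sym2.eq_iff.mp hvw with ⟨hvw, -⟩ | ⟨hvpw, hwpv⟩
  · exact hvw
  · have hv' := hp v hv
    have hw' := hp w hw
    rw [hwpv] at hv'
    rw [← hvpw] at hw'
    omega

lemma parentGraph_isTree [Finite V] (hp : ∀ v, v ≠ r → h (p v) + 1 = h v) (hr : h r = 0) :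
    (parentGraph p r).IsTree := by
  refine SimpleGraph.isTree_iff_connected_and_card.mpr ⟨parentGraph_connected hp hr, ?_⟩
  rw [Nat.card_coe_set_eq, edgeSet_parentGraph hp, (injOn_parentEdge hp).ncard_image,
    ← Set.ncard_compl_add_ncard {r}, Set.ncard_singleton]

end ParentGraph

section Cube

variable {n : ℕ}

lemma edgeInDir_mk_iff {i : Fin n} {U V : Finset (Fin n)} :
    edgeInDir i s(U, V) ↔ symmDiff U V = {i} := by
  constructor
  · rintro ⟨X, hX⟩
    rcases Sym2.eq_iff.mp hX with ⟨rfl, rfl⟩ | ⟨rfl, rfl⟩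
    · exact symmDiff_symmDiff_cancel_left _ _
    · rw [symmDiff_comm]
      exact symmDiff_symmDiff_cancel_left _ _
  · intro h
    exact ⟨U, by rw [← h, symmDiff_symmDiff_cancel_left]⟩

lemma edgeInDir_unique {i j : Fin n} {e : Sym2 (Finset (Fin n))} (hi : edgeInDir i e)
    (hj : edgeInDir j e) : i = j := by
  induction e using Sym2.ind with
  | _ U V =>
    exact Finset.singleton_injective
      ((edgeInDir_mk_iff.mp hi).symm.trans (edgeInDir_mk_iff.mp hj))

lemma exists_edgeInDir_of_mem_edgeSet {T : SimpleGraph (Finset (Fin n))} (hT : T ≤ cube n)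
    {e : Sym2 (Finset (Fin n))} (he : e ∈ T.edgeSet) : ∃ i, edgeInDir i e := by
  induction e using Sym2.ind with
  | _ U V =>
    obtain ⟨i, hi⟩ := Finset.card_eq_one.mp (hT he)
    exact ⟨i, edgeInDir_mk_iff.mpr hi⟩

lemma symmDiff_erase_self {X : Finset (Fin n)} {i : Fin n} (h : i ∈ X) :
    symmDiff X (X.erase i) = {i} := by
  ext j
  by_cases hji : j = i <;> simp [Finset.mem_symmDiff, hji, h]

lemma cube_adj_erase {X : Finset (Fin n)} {i : Fin n} (h : i ∈ X) :
    (cube n).Adj X (X.erase i) := by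
  change (symmDiff X (X.erase i)).card = 1
  rw [symmDiff_erase_self h, Finset.card_singleton]

end Cube

section SectionTree

variable {n : ℕ} {ψ : Finset (Fin n) → Fin n}

lemma card_erase_section_add_one (hψ : IsSection ψ) (Y : Finset (Fin n)) (hY : Y ≠ ∅) :
    (Y.erase (ψ Y)).card + 1 = Y.card :=
  Finset.card_erase_add_one (hψ Y (Finset.nonempty_iff_ne_empty.mpr hY))

lemma parentGraph_section_le_cube (hψ : IsSection ψ) :
    parentGraph (fun Y => Y.erase (ψ Y)) ∅ ≤ cube n := by
  intro U V hUV
  obtain ⟨-, ⟨hU, rfl⟩ | ⟨hV, rfl⟩⟩ := (SimpleGraph.fromRel_adj _ _ _).mp hUV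
  · exact cube_adj_erase (hψ U (Finset.nonempty_iff_ne_empty.mpr hU))
  · exact (cube_adj_erase (hψ V (Finset.nonempty_iff_ne_empty.mpr hV))).symm

lemma dirCount_parentGraph_section (hψ : IsSection ψ) (i : Fin n) :
    dirCount (parentGraph (fun Y => Y.erase (ψ Y)) ∅) i = secCount ψ i := by
  have hp := card_erase_section_add_one hψ
  have hfiber : {Y | Y.Nonempty ∧ ψ Y = i} =
      {∅}ᶜ ∩ (fun Y => s(Y, Y.erase (ψ Y))) ⁻¹' {e | edgeInDir i e} := by
    ext Y
    simp only [Set.mem_ofPred_eq, Set.mem_inter_iff, Set.mem_compl_singleton_iff,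
      Set.mem_preimage, ← Finset.nonempty_iff_ne_empty]
    refine and_congr_right fun hY => ?_
    rw [edgeInDir_mk_iff, symmDiff_erase_self (hψ Y hY), Finset.singleton_inj]
  rw [dirCount, secCount, hfiber,
    ← ((injOn_parentEdge hp).mono Set.inter_subset_left).ncard_image,
    Set.image_inter_preimage, ← edgeSet_parentGraph hp]
  rfl

theorem exists_upright_of_isSection (hψ : IsSection ψ) :
    ∃ T, IsSpanningTreeOf T (cube n) ∧ IsUpright T ∧ IsTreeSection T ψ ∧
      ∀ i, dirCount T i = secCount ψ i := by
  have hp := card_erase_section_add_one hψ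
  refine ⟨parentGraph (fun Y => Y.erase (ψ Y)) ∅,
    ⟨parentGraph_section_le_cube hψ, parentGraph_isTree hp Finset.card_empty⟩,
    fun X => parentGraph_dist_root hp Finset.card_empty X,
    fun Y hY => ⟨hψ Y hY, parentGraph_adj_parent hp hY.ne_empty⟩,
    dirCount_parentGraph_section hψ⟩

end SectionTree

section SpanningTree

variable {n : ℕ} {T : SimpleGraph (Finset (Fin n))}

lemma sum_dirCount_eq_ncard (R : Finset (Fin n)) :
    ∑ i ∈ R, dirCount T i = {e | e ∈ T.edgeSet ∧ ∃ i ∈ R, edgeInDir i e}.ncard := by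
  classical
  induction R using Finset.induction_on with
  | empty => simp
  | insert j R hj ih =>
    rw [Finset.sum_insert hj, ih, dirCount, ← Set.ncard_union_eq]
    · congr 1
      ext e
      simp only [Set.mem_union, Set.mem_ofPred_eq, Finset.exists_mem_insert]
      tauto
    · rw [Set.disjoint_left]
      rintro e ⟨-, hje⟩ ⟨-, i, hi, hie⟩
      exact hj (edgeInDir_unique hie hje ▸ hi)

lemma sum_dirCount_of_isSpanningTreeOf (hT : IsSpanningTreeOf T (cube n)) :
    ∑ i, dirCount T i = 2 ^ n - 1 := by
  have hedges : {e | e ∈ T.edgeSet ∧ ∃ i ∈ Finset.univ, edgeInDir i e} = T.edgeSet := by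
    ext e
    simpa using exists_edgeInDir_of_mem_edgeSet hT.1
  have hcard := (SimpleGraph.isTree_iff_connected_and_card.mp hT.2).2
  have hV : Nat.card (Finset (Fin n)) = 2 ^ n := by
    rw [Nat.card_eq_fintype_card, Fintype.card_finset, Fintype.card_fin]
  rw [sum_dirCount_eq_ncard, hedges, ← Nat.card_coe_set_eq]
  omega

lemma inter_eq_of_edgeInDir {i : Fin n} {U V R : Finset (Fin n)} (h : edgeInDir i s(U, V))
    (hi : i ∉ R) : U ∩ R = V ∩ R := by
  rw [← symmDiff_eq_bot, ← Finset.inf_eq_inter, ← Finset.inf_eq_inter,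
    ← inf_symmDiff_distrib_right, edgeInDir_mk_iff.mp h]
  exact Finset.singleton_inter_of_notMem hi

def projVertex (R U : Finset (Fin n)) : ↥{W : Finset (Fin n) | W ⊆ R} :=
  ⟨U ∩ R, Finset.inter_subset_right⟩

lemma projVertex_val {R : Finset (Fin n)} (A : ↥{W : Finset (Fin n) | W ⊆ R}) :
    projVertex R A.1 = A :=
  Subtype.ext (Finset.inter_eq_left.mpr A.2)

lemma projTree_connected {R : Finset (Fin n)} (hT : T.Connected) :
    (projTree n R T).Connected := by
  have hstep :
      T.Adj ≤ Function.onFun (Relation.ReflTransGen (projTree n R T).Adj) (projVertex R) := by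
    intro U V hUV
    by_cases hUV' : U ∩ R = V ∩ R
    · rw [Function.onFun, show projVertex R U = projVertex R V from Subtype.ext hUV']
    · exact .single ⟨hUV', U, V, hUV, rfl, rfl⟩
  have : Nonempty ↥{W : Finset (Fin n) | W ⊆ R} := ⟨projVertex R ∅⟩
  refine .mk fun A B => ?_
  rw [← projVertex_val A, ← projVertex_val B, SimpleGraph.reachable_iff_reflTransGen]
  exact Relation.ReflTransGen.lift' _ hstep _ _
    ((SimpleGraph.reachable_iff_reflTransGen _ _).mp (hT.preconnected A.1 B.1))

lemma edgeSet_projTree_subset (hT : T ≤ cube n) (R : Finset (Fin n)) :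
    (projTree n R T).edgeSet ⊆
      Sym2.map (projVertex R) '' {e | e ∈ T.edgeSet ∧ ∃ i ∈ R, edgeInDir i e} := by
  intro e he
  induction e using Sym2.ind with
  | _ A B =>
    rw [SimpleGraph.mem_edgeSet] at he
    obtain ⟨hAB, U, V, hUV, hUA, hVB⟩ := he
    obtain ⟨i, hi⟩ := exists_edgeInDir_of_mem_edgeSet hT (T.mem_edgeSet.mpr hUV)
    refine ⟨s(U, V), ⟨hUV, i, ?_, hi⟩, ?_⟩
    · by_contra hiR
      exact hAB (hUA ▸ hVB ▸ inter_eq_of_edgeInDir hi hiR)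
    · have hA : projVertex R U = A := Subtype.ext hUA
      have hB : projVertex R V = B := Subtype.ext hVB
      rw [Sym2.map_mk, hA, hB]

lemma card_subsets (R : Finset (Fin n)) :
    Nat.card ↥{W : Finset (Fin n) | W ⊆ R} = 2 ^ R.card := by
  rw [Nat.card_coe_set_eq, ← Finset.card_powerset, ← Set.ncard_coe_finset]
  congr 1
  ext W
  simp

/-- Projecting `T` onto `Q_R` gives a connected graph on `2 ^ |R|` vertices whose edges come
from the edges of `T` in directions of `R`. -/
lemma pow_card_sub_one_le_sum_dirCount (hT : IsSpanningTreeOf T (cube n)) (R : Finset (Fin n)) :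
    2 ^ R.card - 1 ≤ ∑ i ∈ R, dirCount T i := by
  have hproj := (projTree_connected (R := R) hT.2.1).card_vert_le_card_edgeSet_add_one
  rw [card_subsets, Nat.card_coe_set_eq] at hproj
  have := (Set.ncard_le_ncard (edgeSet_projTree_subset hT.1 R)).trans (Set.ncard_image_le)
  rw [sum_dirCount_eq_ncard]
  omega

end SpanningTree

open Finset in
theorem exists_fiber_card_eq_of_hall {α ι : Type*} [Fintype α] [Fintype ι] [DecidableEq ι]
    (t : α → Finset ι) (c : ι → ℕ)
    (hall : ∀ s : Finset α, #s ≤ ∑ i ∈ s.biUnion t, c i)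
    (htot : ∑ i, c i = Fintype.card α) :
    ∃ f : α → ι, (∀ a, f a ∈ t a) ∧ ∀ i, #{a | f a = i} = c i := by
  -- `i` offers the `c i` slots `⟨i, k⟩` with `k < c i`; Hall matches each `a` to its own slot.
  let slots (U : Finset ι) : Finset (Σ _ : ι, ℕ) := U.sigma fun i => range (c i)
  have card_slots (U : Finset ι) : #(slots U) = ∑ i ∈ U, c i := by simp [slots]
  have biUnion_slots (s : Finset α) : s.biUnion (slots ∘ t) = slots (s.biUnion t) := by
    ext ⟨i, k⟩
    simp only [slots, mem_biUnion, mem_sigma, Function.comp_apply]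
    tauto
  obtain ⟨g, hg, hgt⟩ := (all_card_le_biUnion_card_iff_exists_injective (slots ∘ t)).mp
    fun s => by rw [biUnion_slots, card_slots]; exact hall s
  refine ⟨fun a => (g a).1, fun a => (mem_sigma.mp (hgt a)).1, ?_⟩
  have fiber_le (i : ι) : #{a | (g a).1 = i} ≤ c i := by
    calc #{a | (g a).1 = i} ≤ #(slots {i}) := by
          refine card_le_card_of_injOn g (fun a ha => ?_) hg.injOn
          have hga := mem_sigma.mp (hgt a)
          rw [mem_coe, mem_filter] at ha
          exact mem_sigma.mpr ⟨mem_singleton.mpr ha.2, ha.2 ▸ hga.2⟩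
      _ = c i := by rw [card_slots, sum_singleton]
  have sum_fiber : ∑ i, #{a | (g a).1 = i} = ∑ i, c i := by
    rw [htot, ← card_univ, card_eq_sum_card_fiberwise (f := fun a => (g a).1) (t := univ)]
    exact fun a _ => mem_coe.mpr (mem_univ _)
  exact fun i => (sum_eq_sum_iff_of_le fun i _ => fiber_le i).mp sum_fiber i (mem_univ i)

section PrescribedSection

open Finset

variable {n : ℕ} {a : Fin n → ℕ} {X : Finset (Fin n)} {x : Fin n}

lemma card_nonempty_finsets : Fintype.card {Y : Finset (Fin n) // Y.Nonempty} = 2 ^ n - 1 := by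
  classical
  simp only [Fintype.card_subtype, nonempty_iff_ne_empty, filter_ne',
    card_erase_of_mem (mem_univ _), card_univ, Fintype.card_finset, Fintype.card_fin]

def pinnedChoices (X : Finset (Fin n)) (x : Fin n) (Y : {Y : Finset (Fin n) // Y.Nonempty}) :
    Finset (Fin n) :=
  if Y.1 = X then {x} else Y.1

lemma card_le_sum_pinnedChoices (hall : ∀ R : Finset (Fin n), 2 ^ #R - 1 ≤ ∑ i ∈ R, a i)
    (htot : ∑ i, a i = 2 ^ n - 1) (hirr : IsIrreducibleSig a) (hX : X.Nonempty)
    (s : Finset {Y : Finset (Fin n) // Y.Nonempty}) :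
    #s ≤ ∑ i ∈ s.biUnion (pinnedChoices X x), a i := by
  classical
  set U := s.biUnion (pinnedChoices X x)
  let X' : {Y : Finset (Fin n) // Y.Nonempty} := ⟨X, hX⟩
  have h_erase : #(s.erase X') ≤ 2 ^ #U - 1 := by
    rw [← card_powerset, ← card_erase_of_mem (empty_mem_powerset U)]
    refine card_le_card_of_injOn Subtype.val (fun Y hY => ?_) Subtype.val_injective.injOn
    obtain ⟨hYX, hYs⟩ := mem_erase.mp hY
    have hchoices : pinnedChoices X x Y = Y.1 := if_neg fun h => hYX (Subtype.ext h)
    refine mem_erase.mpr ⟨Y.2.ne_empty, mem_powerset.mpr ?_⟩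
    exact hchoices ▸ subset_biUnion_of_mem _ hYs
  have h_univ : #s ≤ 2 ^ n - 1 := card_nonempty_finsets ▸ card_le_univ s
  have h_pos : 1 ≤ 2 ^ #U := Nat.one_le_two_pow
  by_cases hxU : x ∈ U
  · by_cases hU : U = univ
    · rw [hU, htot]
      exact h_univ
    · have h_strict : ∑ i ∈ U, a i ≠ 2 ^ #U - 1 := fun h => hirr ⟨U, ⟨x, hxU⟩, hU, h⟩
      have := hall U
      have := pred_card_le_card_erase (s := s) (a := X')
      omega
  · have hX's : X' ∉ s := fun h => hxU (subset_biUnion_of_mem _ h (by simp [pinnedChoices, X']))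
    rw [erase_eq_of_notMem hX's] at h_erase
    exact h_erase.trans (hall U)

theorem exists_isSection_secCount_eq
    (hall : ∀ R : Finset (Fin n), 2 ^ #R - 1 ≤ ∑ i ∈ R, a i)
    (htot : ∑ i, a i = 2 ^ n - 1) (hirr : IsIrreducibleSig a) (hX : X.Nonempty) (hx : x ∈ X) :
    ∃ ψ, IsSection ψ ∧ ψ X = x ∧ ∀ i, secCount ψ i = a i := by
  classical
  obtain ⟨f, hf, hfa⟩ := exists_fiber_card_eq_of_hall (pinnedChoices X x) a
    (card_le_sum_pinnedChoices hall htot hirr hX) (htot.trans card_nonempty_finsets.symm)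
  have hfX : f ⟨X, hX⟩ = x := by simpa [pinnedChoices] using hf ⟨X, hX⟩
  refine ⟨fun Y => if h : Y.Nonempty then f ⟨Y, h⟩ else x, fun Y hY => ?_,
    by simp [hX, hfX], ?_⟩
  · by_cases hYX : Y = X
    · subst hYX
      simpa [hY, hfX] using hx
    · simpa [hY, pinnedChoices, hYX] using hf ⟨Y, hY⟩
  · intro i
    rw [secCount, ← hfa i, ← Set.ncard_coe_finset, ← Subtype.val_injective.injOn.ncard_image]
    congr 1
    ext Y
    by_cases hY : Y.Nonempty <;> simp [hY]

end PrescribedSection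

/-- Corollary: specifying a section at one vertex, irreducible case.
For an irreducible signature `a` of `Q_n`, any nonempty `X` and any `x ∈ X`, there is an
upright spanning tree with signature `a` whose section sends `X` to `x`. -/
theorem stmt6 (n : ℕ) (a : Fin n → ℕ) (hsig : IsSignature n a) (hirr : IsIrreducibleSig a)
    (X : Finset (Fin n)) (hX : X.Nonempty) (x : Fin n) (hx : x ∈ X) :
    ∃ (T : SimpleGraph (Finset (Fin n))) (ψ : Finset (Fin n) → Fin n),
      IsSpanningTreeOf T (cube n) ∧ IsUpright T ∧ HasSig T a ∧
        IsTreeSection T ψ ∧ ψ X = x := by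
  obtain ⟨T₀, hT₀, hsig₀⟩ := hsig
  obtain rfl : dirCount T₀ = a := funext hsig₀
  obtain ⟨ψ, hψ, hψX, hcount⟩ := exists_isSection_secCount_eq
    (pow_card_sub_one_le_sum_dirCount hT₀) (sum_dirCount_of_isSpanningTreeOf hT₀) hirr hX hx
  obtain ⟨T, hT, hup, hψT, hdir⟩ := exists_upright_of_isSection hψ
  exact ⟨T, ψ, hT, hup, fun i => (hdir i).trans (hcount i), hψT, hψX⟩
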